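/- arXiv:2503.09448 — 2 statements merged into one kernel-verified Lean document; each statement's English description precedes it below -/
import Mathlib

section
/- For any probability density f on [0, π] (a nonnegative measurable function with ∫₀^π f = 1), and 0 < ε < π/2, the integral ∫₀^π f(e) · Pr(e) de is at least ε/π, where Pr(e) = 1 for e ≤ ε or e ≥ π − ε and Pr(e) = min(ε/(π sin e), 1) otherwise. In particular no distribution of prediction errors can achieve viewpoint leakage probability below ε/π. -/
open Real MeasureTheory

/-- Conditional viewpoint-leakage probability of the paper. -/
noncomputable def condLeak (ε e : ℝ) : ℝ :=
  if ε < e ∧ e < π - ε then min (ε / (π * Real.sin e)) 1 else 1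

/-! Since `0 < sin e ≤ 1` on the middle range, `Pr(e)` never drops below `ε / π`; integrating
this pointwise bound against the probability density `f` gives the claim. -/

lemma condLeak_le_one (ε e : ℝ) : condLeak ε e ≤ 1 := by
  unfold condLeak
  split_ifs
  · exact min_le_right _ _
  · exact le_rfl

lemma div_pi_le_condLeak {ε : ℝ} (hε0 : 0 ≤ ε) (hεπ : ε ≤ π) (e : ℝ) :
    ε / π ≤ condLeak ε e := by
  have hεπ_le_one : ε / π ≤ 1 := div_le_one_of_le₀ hεπ pi_pos.le
  unfold condLeak
  split_ifs with he
  · obtain ⟨he_left, he_right⟩ := he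
    have hsin_pos : 0 < sin e := sin_pos_of_pos_of_lt_pi (by linarith) (by linarith)
    refine le_min ?_ hεπ_le_one
    calc ε / π = ε / (π * 1) := by rw [mul_one]
      _ ≤ ε / (π * sin e) := by gcongr; exact sin_le_one e
  · exact hεπ_le_one

lemma measurable_condLeak (ε : ℝ) : Measurable (condLeak ε) :=
  Measurable.ite measurableSet_Ioo
    ((measurable_const.div (measurable_const.mul measurable_sin)).min measurable_const)
    measurable_const

lemma IntervalIntegrable.mul_of_abs_le {f g : ℝ → ℝ} {a b C : ℝ}
    (hf : IntervalIntegrable f volume a b) (hg : Measurable g) (hgC : ∀ x, |g x| ≤ C) :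
    IntervalIntegrable (fun x => f x * g x) volume a b :=
  ⟨hf.1.mul_bdd hg.aestronglyMeasurable (ae_of_all _ hgC),
    hf.2.mul_bdd hg.aestronglyMeasurable (ae_of_all _ hgC)⟩

lemma intervalIntegral.const_mul_integral_le_integral_mul {f g : ℝ → ℝ} {a b c : ℝ}
    (hab : a ≤ b) (hf_nonneg : ∀ x ∈ Set.Icc a b, 0 ≤ f x)
    (hf : IntervalIntegrable f volume a b)
    (hfg : IntervalIntegrable (fun x => f x * g x) volume a b)
    (hcg : ∀ x ∈ Set.Icc a b, c ≤ g x) :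
    c * ∫ x in a..b, f x ≤ ∫ x in a..b, f x * g x := by
  rw [← intervalIntegral.integral_const_mul]
  refine intervalIntegral.integral_mono_on hab (hf.const_mul c) hfg fun x hx => ?_
  rw [mul_comm]
  exact mul_le_mul_of_nonneg_left (hcg x hx) (hf_nonneg x hx)

theorem leakage_prob_ge_general (ε : ℝ) (hε0 : 0 < ε) (hε : ε < π / 2)
    (f : ℝ → ℝ) (hf_nonneg : ∀ e ∈ Set.Icc (0 : ℝ) π, 0 ≤ f e)
    (hf_int : IntervalIntegrable f volume 0 π)
    (hf_one : ∫ e in (0 : ℝ)..π, f e = 1) :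
    ε / π ≤ ∫ e in (0 : ℝ)..π, f e * condLeak ε e := by
  have hεπ : ε ≤ π := by linarith [pi_pos]
  have hlower := div_pi_le_condLeak hε0.le hεπ
  have habs_le_one (e : ℝ) : |condLeak ε e| ≤ 1 :=
    abs_le.2 ⟨by linarith [hlower e, div_nonneg hε0.le pi_pos.le], condLeak_le_one ε e⟩
  have hint := hf_int.mul_of_abs_le (measurable_condLeak ε) habs_le_one
  simpa [hf_one] using
    intervalIntegral.const_mul_integral_le_integral_mul pi_pos.le hf_nonneg hf_int hint
      fun e _ => hlower e

/-- For any probability density `f` on `[0, π]` and `0 < ε < π/2`, the viewpoint leakage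
probability `∫₀^π f(e) Pr(e) de` is at least `ε/π`. -/
theorem leakage_prob_ge (ε : ℝ) (hε0 : 0 < ε) (hε : ε < π / 2)
    (f : ℝ → ℝ) (hf_meas : Measurable f) (hf_nonneg : ∀ e ∈ Set.Icc (0 : ℝ) π, 0 ≤ f e)
    (hf_int : IntervalIntegrable f volume 0 π)
    (hf_one : ∫ e in (0 : ℝ)..π, f e = 1) :
    ε / π ≤ ∫ e in (0 : ℝ)..π, f e * condLeak ε e :=
  leakage_prob_ge_general ε hε0 hε f hf_nonneg hf_int hf_one
end

section
/- Let 0 < ε < π/2, let e ∈ (ε, π − ε), and let 0 < q ≤ ε/(π sin e) with qπ sin e < π/2. Then n* = arccos(cos ε / cos(q π sin e)) satisfies min(arccos(cos ε / cos(min{n*, ε})) / (π sin e), 1) = q, i.e., this noise magnitude achieves conditional leakage probability exactly q. -/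
open Real Set

section LeakageAngle

variable {ε n : ℝ}

lemma cos_div_cos_mem_Icc (hn : 0 ≤ n) (hnε : n ≤ ε) (hε : ε < π / 2) :
    cos ε / cos n ∈ Icc (cos ε) 1 := by
  have hcos_n : 0 < cos n := cos_pos_of_mem_Ioo ⟨by linarith, by linarith⟩
  have hcos_ε : 0 ≤ cos ε := cos_nonneg_of_mem_Icc ⟨by linarith, hε.le⟩
  exact ⟨le_div_self hcos_ε hcos_n (cos_le_one n),
    div_le_one_of_le₀ (cos_le_cos_of_nonneg_of_le_pi hn (by linarith) hnε) hcos_n.le⟩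

lemma arccos_cos_div_cos_le (hn : 0 ≤ n) (hnε : n ≤ ε) (hε : ε < π / 2) :
    arccos (cos ε / cos n) ≤ ε :=
  calc arccos (cos ε / cos n) ≤ arccos (cos ε) :=
        arccos_le_arccos (cos_div_cos_mem_Icc hn hnε hε).1
    _ = ε := arccos_cos (by linarith) (by linarith)

/-- The relation `cos m * cos n = cos ε` between `n` and its image `m` is symmetric, so
`n ↦ arccos (cos ε / cos n)` is an involution of `[0, ε]`. -/
lemma arccos_cos_div_cos_arccos_cos_div_cos (hn : 0 ≤ n) (hnε : n ≤ ε) (hε : ε < π / 2) :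
    arccos (cos ε / cos (arccos (cos ε / cos n))) = n := by
  have hcos_ε : cos ε ≠ 0 := (cos_pos_of_mem_Ioo ⟨by linarith, hε⟩).ne'
  obtain ⟨hlow, hup⟩ := cos_div_cos_mem_Icc hn hnε hε
  rw [cos_arccos (by linarith [neg_one_le_cos ε]) hup, div_div_cancel₀ hcos_ε,
    arccos_cos hn (by linarith [pi_pos])]

end LeakageAngle

lemma sin_le_sin_of_mem_Icc_sub {x y : ℝ} (hx : 0 ≤ x) (hy : y ∈ Icc x (π - x)) :
    sin x ≤ sin y := by
  rcases le_total y (π / 2) with h | h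
  · exact sin_le_sin_of_le_of_le_pi_div_two (by linarith [pi_pos]) h hy.1
  · rw [← sin_pi_sub y]
    exact sin_le_sin_of_le_of_le_pi_div_two (by linarith [pi_pos]) (by linarith)
      (by linarith [hy.2])

lemma lt_pi_mul_sin {ε e : ℝ} (hε0 : 0 < ε) (hε : ε ≤ π / 2) (he : e ∈ Icc ε (π - ε)) :
    ε < π * sin e :=
  calc ε = π / 2 * (2 / π * ε) := by field_simp
    _ ≤ π / 2 * sin ε := by gcongr; exact mul_le_sin hε0.le hε
    _ < π * sin ε := by
        gcongr
        · exact sin_pos_of_pos_of_lt_pi hε0 (by linarith [pi_pos])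
        · linarith [pi_pos]
    _ ≤ π * sin e := by gcongr; exact sin_le_sin_of_mem_Icc_sub hε0.le he

theorem noise_achieves_q_general (ε e q : ℝ) (hε0 : 0 < ε) (hε : ε < π / 2)
    (he : e ∈ Set.Ioo ε (π - ε)) (hq0 : 0 < q) (hq : q ≤ ε / (π * Real.sin e)) :
    min (Real.arccos (Real.cos ε /
        Real.cos (min (Real.arccos (Real.cos ε / Real.cos (q * π * Real.sin e))) ε)) /
        (π * Real.sin e)) 1 = q := by
  have hs : 0 < π * sin e :=
    mul_pos pi_pos (sin_pos_of_pos_of_lt_pi (by linarith [he.1]) (by linarith [he.2]))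
  have ha : q * π * sin e = q * (π * sin e) := mul_assoc _ _ _
  have ha0 : 0 ≤ q * π * sin e := by rw [ha]; positivity
  have haε : q * π * sin e ≤ ε := by rwa [ha, ← le_div_iff₀ hs]
  have hq1 : q ≤ 1 :=
    hq.trans ((div_le_one hs).mpr (lt_pi_mul_sin hε0 hε.le (Ioo_subset_Icc_self he)).le)
  rw [min_eq_left (arccos_cos_div_cos_le ha0 haε hε),
    arccos_cos_div_cos_arccos_cos_div_cos ha0 haε hε, ha, mul_div_cancel_right₀ _ hs.ne',
    min_eq_left hq1]

/-- For `0 < ε < π/2`, `e ∈ (ε, π − ε)`, `0 < q ≤ ε/(π sin e)` with `qπ sin e < π/2`,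
the noise magnitude `n* = arccos(cos ε / cos(qπ sin e))` achieves conditional leakage
probability exactly `q`. -/
theorem noise_achieves_q (ε e q : ℝ) (hε0 : 0 < ε) (hε : ε < π / 2)
    (he : e ∈ Set.Ioo ε (π - ε)) (hq0 : 0 < q) (hq : q ≤ ε / (π * Real.sin e))
    (hq2 : q * π * Real.sin e < π / 2) :
    min (Real.arccos (Real.cos ε /
        Real.cos (min (Real.arccos (Real.cos ε / Real.cos (q * π * Real.sin e))) ε)) /
        (π * Real.sin e)) 1 = q :=
  noise_achieves_q_general ε e q hε0 hε he hq0 hq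
end
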